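/- Let 𝔊 be a finite connected symmetric graph without loops and dead ends, and let Δ_𝔈 be its edge Laplacian. If c(𝔊) ≠ 1 or 𝔊 is not bipartite, then dim{Δ_𝔈 = −1} equals c(𝔊) if 𝔊 is bipartite and c(𝔊) − 1 if 𝔊 is not bipartite. If c(𝔊) = 1 and 𝔊 is bipartite, then dim{Δ_𝔈 = −1} = 2. -/

import Mathlib

/-- The set of directed edges of a graph: ordered pairs of adjacent vertices. -/
abbrev DirEdge {V : Type*} (G : SimpleGraph V) := {p : V × V // G.Adj p.1 p.2}

/-- The edge Laplacian `Δ_𝔈 f (e) = Σ_{e' : ι(e') = τ(e), τ(e') ≠ ι(e)} f e'`,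
summing `f` over the directed edges `e'` continuing `e` without backtracking. -/
noncomputable def edgeLaplacian {V : Type*} [Fintype V] [DecidableEq V]
    (G : SimpleGraph V) [DecidableRel G.Adj] :
    (DirEdge G → ℂ) →ₗ[ℂ] (DirEdge G → ℂ) where
  toFun f e := ∑ e' ∈ Finset.univ.filter
    (fun e' : DirEdge G => e'.1.1 = e.1.2 ∧ e'.1.2 ≠ e.1.1), f e'
  map_add' f g := by funext e; simp [Finset.sum_add_distrib]
  map_smul' c f := by funext e; simp [Finset.mul_sum]

/-!
Write `F = outSum f` for the sum of `f` over the directed edges leaving a vertex. The equation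
`Δ_𝔈 f = -f` reads `f (rev e) = f e + F (τ e)`; adding it for `e` and `rev e` shows that `F`
changes sign along every edge, i.e. lies in the space `A` of alternating functions. On a connected
graph `A` is `0` if the graph is not bipartite and is spanned by the `±1` sign of a 2-colouring
otherwise.

Apply rank–nullity to `f ↦ F` on the eigenspace. Its kernel consists of the reversal-invariant
functions with vanishing out-sums; since the unoriented incidence matrix has rank `|V| - dim A`, it
has dimension `|𝔈|/2 - |V| + dim A = c - 1 + dim A`. Its image consists of those `g ∈ A` with
`g (2 - deg)` in the column space of the incidence matrix. That column space is orthogonal to `A`,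
and pairing `sign (2 - deg)` with `sign` gives `2|V| - |𝔈| = 2 - 2c`, so the image is `A` when
`c = 1` and `0` otherwise.
-/

open Finset Module

theorem LinearMap.finrank_map_add_finrank_inf_ker {K M N : Type*} [DivisionRing K]
    [AddCommGroup M] [Module K M] [AddCommGroup N] [Module K N] [FiniteDimensional K M]
    (f : M →ₗ[K] N) (p : Submodule K M) :
    finrank K (p.map f) + finrank K ↥(p ⊓ LinearMap.ker f) = finrank K p := by
  rw [← f.range_domRestrict, ← Submodule.map_comap_subtype, Submodule.finrank_map_subtype_eq,
    ← f.ker_domRestrict]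
  exact (f.domRestrict p).finrank_range_add_finrank_ker

section Involution

variable (K : Type*) {α : Type*} [Field K] (r : α → α)

def invariantFun : Submodule K (α → K) where
  carrier := {f | ∀ a, f (r a) = f a}
  add_mem' hf hg a := by simp [hf a, hg a]
  zero_mem' _ := rfl
  smul_mem' c f hf a := by simp [hf a]

def antiInvariantFun : Submodule K (α → K) where
  carrier := {f | ∀ a, f (r a) = -f a}
  add_mem' hf hg a := by simp [hf a, hg a, add_comm]
  zero_mem' _ := by simp
  smul_mem' c f hf a := by simp [hf a]

variable {K r}

theorem mem_invariantFun {f : α → K} : f ∈ invariantFun K r ↔ ∀ a, f (r a) = f a := Iff.rfl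

theorem mem_antiInvariantFun {f : α → K} : f ∈ antiInvariantFun K r ↔ ∀ a, f (r a) = -f a :=
  Iff.rfl

theorem isCompl_invariantFun_antiInvariantFun [NeZero (2 : K)] (hr : r.Involutive) :
    IsCompl (invariantFun K r) (antiInvariantFun K r) := by
  refine ⟨Submodule.disjoint_def.mpr fun f hs ha => funext fun a => ?_,
    Submodule.codisjoint_iff_exists_add_eq.mpr fun f => ?_⟩
  · have h : (2 : K) * f a = 0 := by linear_combination (ha a) - (hs a)
    exact (mul_eq_zero.mp h).resolve_left two_ne_zero
  · refine ⟨fun a => (f a + f (r a)) / 2, fun a => (f a - f (r a)) / 2, fun a => ?_, fun a => ?_,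
      funext fun a => ?_⟩
    · simp only [hr a]; ring
    · simp only [hr a]; ring
    · simp only [Pi.add_apply]; field_simp; ring

variable [Fintype α]

/-- Multiplying by an orientation `σ` (`σ ∘ r = -σ`, `σ ^ 2 = 1`) exchanges invariant and
anti-invariant functions. -/
theorem finrank_invariantFun_eq_antiInvariantFun (hr : r.Involutive) (hfix : ∀ a, r a ≠ a) :
    finrank K (invariantFun K r) = finrank K (antiInvariantFun K r) := by
  let o := Fintype.equivFin α
  let σ : α → K := fun a => if o a < o (r a) then 1 else -1
  have hσr a : σ (r a) = -σ a := by
    have : o (r a) ≠ o a := o.injective.ne (hfix a)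
    rcases this.lt_or_gt with h | h <;> simp [σ, h, h.not_gt, hr a]
  have hσσ a : σ a * σ a = 1 := by simp only [σ]; split_ifs <;> ring
  let m : (α → K) ≃ₗ[K] (α → K) :=
    { toFun f a := σ a * f a
      invFun f a := σ a * f a
      map_add' f g := by funext a; simp [mul_add]
      map_smul' c f := by funext a; simp; ring
      left_inv f := by funext a; simp [← mul_assoc, hσσ]
      right_inv f := by funext a; simp [← mul_assoc, hσσ] }
  have hm (ε : K) (f : α → K) (hf : ∀ a, f (r a) = ε * f a) a : m f (r a) = -ε * m f a := by
    simp only [m, LinearEquiv.coe_mk, LinearMap.coe_mk, AddHom.coe_mk, hσr, hf]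
    ring
  refine le_antisymm ?_ ?_ <;> rw [← LinearEquiv.finrank_map_eq m] <;>
    refine Submodule.finrank_mono ?_ <;> rintro _ ⟨f, hf, rfl⟩ a
  · simpa using hm 1 f (by simpa using mem_invariantFun.mp hf) a
  · simpa using hm (-1) f (by simpa using mem_antiInvariantFun.mp hf) a

theorem two_mul_finrank_invariantFun [NeZero (2 : K)] (hr : r.Involutive) (hfix : ∀ a, r a ≠ a) :
    2 * finrank K (invariantFun K r) = Fintype.card α := by
  have := Submodule.finrank_add_eq_of_isCompl (isCompl_invariantFun_antiInvariantFun (K := K) hr)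
  rw [← finrank_invariantFun_eq_antiInvariantFun hr hfix, finrank_fintype_fun_eq_card] at this
  omega

end Involution

namespace DirEdge

variable {V : Type*} {G : SimpleGraph V}

def rev (e : DirEdge G) : DirEdge G := ⟨(e.1.2, e.1.1), e.2.symm⟩

@[simp] theorem rev_fst (e : DirEdge G) : e.rev.1.1 = e.1.2 := rfl

@[simp] theorem rev_snd (e : DirEdge G) : e.rev.1.2 = e.1.1 := rfl

@[simp] theorem rev_rev (e : DirEdge G) : e.rev.rev = e := rfl

theorem rev_involutive : Function.Involutive (rev (G := G)) := rev_rev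

theorem rev_ne_self (e : DirEdge G) : e.rev ≠ e :=
  fun h => e.2.ne (congrArg (·.1.2) h)

end DirEdge

namespace SimpleGraph

open DirEdge Matrix Module.End

variable {V : Type*} (G : SimpleGraph V)

def alternatingFun : Submodule ℂ (V → ℂ) where
  carrier := {g | ∀ u v, G.Adj u v → g u + g v = 0}
  add_mem' hf hg u v h := by simp only [Pi.add_apply]; linear_combination hf u v h + hg u v h
  zero_mem' _ _ _ := by simp
  smul_mem' c g hg u v h := by simp [← mul_add, hg u v h]

variable {G}

theorem mem_alternatingFun {g : V → ℂ} :
    g ∈ G.alternatingFun ↔ ∀ u v, G.Adj u v → g u + g v = 0 := Iff.rfl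

theorem apply_eq_neg_one_pow_length_mul {g : V → ℂ} (hg : g ∈ G.alternatingFun) {u v : V}
    (w : G.Walk u v) : g v = (-1) ^ w.length * g u := by
  induction w with
  | nil => simp
  | cons huw _ ih =>
    rw [ih, Walk.length_cons, pow_succ, eq_neg_of_add_eq_zero_right (hg _ _ huw)]
    ring

theorem eq_zero_of_mem_alternatingFun (hconn : G.Connected) {g : V → ℂ}
    (hg : g ∈ G.alternatingFun) {u : V} (hu : g u = 0) : g = 0 :=
  funext fun v => by simp [apply_eq_neg_one_pow_length_mul hg (hconn u v).some, hu]

theorem alternatingFun_eq_bot (hconn : G.Connected) (hbip : ¬ G.Colorable 2) :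
    G.alternatingFun = ⊥ := by
  obtain ⟨u, w, hodd⟩ : ∃ u, ∃ w : G.Walk u u, ¬ Even w.length := by
    simpa [two_colorable_iff_forall_loop_even] using hbip
  refine (Submodule.eq_bot_iff _).mpr fun g hg => eq_zero_of_mem_alternatingFun hconn hg (u := u) ?_
  have h := apply_eq_neg_one_pow_length_mul hg w
  rw [(Nat.not_even_iff_odd.mp hodd).neg_one_pow] at h
  linear_combination h / 2

def Coloring.sign (C : G.Coloring (Fin 2)) (v : V) : ℂ := if C v = 0 then 1 else -1

theorem Coloring.sign_mul_self (C : G.Coloring (Fin 2)) (v : V) : C.sign v * C.sign v = 1 := by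
  unfold sign; split_ifs <;> ring

theorem Coloring.sign_mem_alternatingFun (C : G.Coloring (Fin 2)) : C.sign ∈ G.alternatingFun := by
  intro u v huv
  have h := C.valid huv
  unfold sign
  split_ifs with hu hv hv
  · exact absurd (hu.trans hv.symm) h
  · ring
  · ring
  · omega

theorem alternatingFun_eq_span_sign (hconn : G.Connected) (C : G.Coloring (Fin 2)) :
    G.alternatingFun = ℂ ∙ C.sign := by
  obtain ⟨u⟩ := hconn.nonempty
  refine le_antisymm (fun g hg => Submodule.mem_span_singleton.mpr ⟨g u * C.sign u, ?_⟩)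
    ((Submodule.span_singleton_le_iff_mem _ _).mpr C.sign_mem_alternatingFun)
  have hd : g - (g u * C.sign u) • C.sign ∈ G.alternatingFun :=
    sub_mem hg (Submodule.smul_mem _ _ C.sign_mem_alternatingFun)
  have h0 := eq_zero_of_mem_alternatingFun hconn hd (u := u)
    (by simp [mul_assoc, C.sign_mul_self])
  exact (sub_eq_zero.mp h0).symm

theorem finrank_alternatingFun_eq_one (hconn : G.Connected) (C : G.Coloring (Fin 2)) :
    finrank ℂ G.alternatingFun = 1 := by
  obtain ⟨v⟩ := hconn.nonempty
  rw [alternatingFun_eq_span_sign hconn C]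
  refine finrank_span_singleton fun h => ?_
  simpa [h] using C.sign_mul_self v

section

variable [DecidableEq V]

variable (G) in
def incidence : Matrix V (DirEdge G) ℂ :=
  fun v e => (if e.1.1 = v then 1 else 0) + (if e.1.2 = v then 1 else 0)

variable [Fintype V]

theorem incidence_transpose_mulVec (g : V → ℂ) :
    (G.incidence)ᵀ *ᵥ g = fun e => g e.1.1 + g e.1.2 := by
  funext e
  simp [mulVec, dotProduct, incidence, add_mul, sum_add_distrib]

theorem ker_incidence_transpose : LinearMap.ker (G.incidence)ᵀ.mulVecLin = G.alternatingFun := by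
  ext g
  simp only [LinearMap.mem_ker, mulVecLin_apply, incidence_transpose_mulVec, funext_iff,
    Pi.zero_apply, mem_alternatingFun]
  exact ⟨fun h u v huv => h ⟨(u, v), huv⟩, fun h e => h _ _ e.2⟩

variable [DecidableRel G.Adj]

variable (G) in
noncomputable def outSum : (DirEdge G → ℂ) →ₗ[ℂ] (V → ℂ) where
  toFun f v := ∑ e ∈ univ.filter (fun e : DirEdge G => e.1.1 = v), f e
  map_add' f g := by funext v; simp [sum_add_distrib]
  map_smul' c f := by funext v; simp [mul_sum]

theorem outSum_apply (f : DirEdge G → ℂ) (v : V) :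
    G.outSum f v = ∑ e ∈ univ.filter (fun e : DirEdge G => e.1.1 = v), f e := rfl

theorem outSum_comp_rev (f : DirEdge G → ℂ) (v : V) :
    G.outSum (f ∘ rev) v = ∑ e ∈ univ.filter (fun e : DirEdge G => e.1.2 = v), f e :=
  sum_nbij' rev rev (by simp) (by simp) (by simp) (by simp) (by simp)

theorem card_filter_fst_eq_degree (v : V) :
    #(univ.filter fun e : DirEdge G => e.1.1 = v) = G.degree v := by
  rw [← G.card_neighborFinset_eq_degree]
  refine card_nbij (·.1.2) (fun e he => ?_) (fun e he e' he' h => ?_) (fun w hw => ?_)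
  · simpa [(mem_filter.mp he).2] using e.2
  · simp only [mem_coe, mem_filter, mem_univ, true_and] at he he'
    exact Subtype.ext (Prod.ext (he.trans he'.symm) h)
  · exact ⟨⟨(v, w), by simpa using hw⟩, by simp, rfl⟩

theorem card_dirEdge_eq_sum_degree : Fintype.card (DirEdge G) = ∑ v, G.degree v := by
  rw [← card_univ, card_eq_sum_card_fiberwise (f := fun e : DirEdge G => e.1.1) (t := univ)
    (fun _ _ => mem_univ _)]
  exact sum_congr rfl fun v _ => card_filter_fst_eq_degree v

theorem sum_filter_fst_of_mem_alternatingFun {g : V → ℂ} (hg : g ∈ G.alternatingFun) (v : V) :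
    ∑ e ∈ univ.filter (fun e : DirEdge G => e.1.1 = v), g e.1.2 = -(G.degree v * g v) := by
  rw [← card_filter_fst_eq_degree, ← nsmul_eq_mul, ← sum_const, ← sum_neg_distrib]
  refine sum_congr rfl fun e he => ?_
  rw [← (mem_filter.mp he).2]
  exact eq_neg_of_add_eq_zero_right (hg _ _ e.2)

theorem edgeLaplacian_apply (f : DirEdge G → ℂ) (e : DirEdge G) :
    edgeLaplacian G f e = G.outSum f e.1.2 - f e.rev := by
  have hrev : e.rev ∈ univ.filter (fun e' : DirEdge G => e'.1.1 = e.1.2) := by simp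
  rw [outSum_apply, ← add_sum_erase _ _ hrev, add_sub_cancel_left]
  refine sum_congr (ext fun e' => ?_) fun _ _ => rfl
  simp only [mem_filter, mem_univ, true_and, mem_erase, ne_eq, Subtype.ext_iff,
    Prod.ext_iff, rev_fst, rev_snd]
  tauto

theorem mem_eigenspace_neg_one_iff {f : DirEdge G → ℂ} :
    f ∈ eigenspace (edgeLaplacian G) (-1) ↔ ∀ e, f e.rev = f e + G.outSum f e.1.2 := by
  simp only [mem_eigenspace_iff, funext_iff, edgeLaplacian_apply, Pi.smul_apply, smul_eq_mul]
  refine forall_congr' fun e => ?_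
  constructor <;> intro h <;> linear_combination -h

theorem eigenspace_neg_one_inf_ker_outSum :
    eigenspace (edgeLaplacian G) (-1) ⊓ LinearMap.ker G.outSum =
      invariantFun ℂ rev ⊓ LinearMap.ker G.outSum := by
  ext f
  simp only [Submodule.mem_inf, LinearMap.mem_ker, mem_eigenspace_neg_one_iff, mem_invariantFun,
    and_congr_left_iff]
  intro hf
  simp [hf]

theorem outSum_mem_alternatingFun {f : DirEdge G → ℂ}
    (hf : f ∈ eigenspace (edgeLaplacian G) (-1)) : G.outSum f ∈ G.alternatingFun := by
  intro u v huv
  have h := mem_eigenspace_neg_one_iff.mp hf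
  have huv' : f ⟨(v, u), huv.symm⟩ = f ⟨(u, v), huv⟩ + G.outSum f v := h ⟨(u, v), huv⟩
  have hvu : f ⟨(u, v), huv⟩ = f ⟨(v, u), huv.symm⟩ + G.outSum f u := h ⟨(v, u), huv.symm⟩
  linear_combination -(huv' + hvu)

theorem incidence_mulVec (f : DirEdge G → ℂ) :
    G.incidence *ᵥ f = G.outSum f + G.outSum (f ∘ rev) := by
  funext v
  simp only [mulVec, dotProduct, incidence, add_mul, ite_mul, one_mul, zero_mul, sum_add_distrib,
    ← sum_filter]
  rw [Pi.add_apply, outSum_comp_rev, outSum_apply]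

theorem rank_incidence_add_finrank_alternatingFun :
    G.incidence.rank + finrank ℂ G.alternatingFun = Fintype.card V := by
  rw [← rank_transpose, ← ker_incidence_transpose, Matrix.rank,
    LinearMap.finrank_range_add_finrank_ker, finrank_fintype_fun_eq_card]

theorem range_incidence :
    LinearMap.range G.incidence.mulVecLin = (invariantFun ℂ rev).map G.outSum := by
  apply le_antisymm
  · rintro _ ⟨f, rfl⟩
    refine ⟨f + f ∘ rev, fun e => by simp [add_comm], ?_⟩
    rw [mulVecLin_apply, incidence_mulVec, map_add]
  · rintro _ ⟨s, hs, rfl⟩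
    have hs' : s ∘ rev = s := funext (mem_invariantFun.mp hs)
    refine ⟨(2 : ℂ)⁻¹ • s, ?_⟩
    rw [mulVecLin_apply, mulVec_smul, incidence_mulVec, hs', ← two_smul ℂ, smul_smul,
      inv_mul_cancel₀ two_ne_zero, one_smul]

theorem incidence_mulVec_of_mem_eigenspace {f : DirEdge G → ℂ}
    (hf : f ∈ eigenspace (edgeLaplacian G) (-1)) :
    G.incidence *ᵥ f = fun v => G.outSum f v * (2 - G.degree v) := by
  funext v
  have h := mem_eigenspace_neg_one_iff.mp hf
  rw [incidence_mulVec, Pi.add_apply, outSum_apply (f ∘ rev), Function.comp_def]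
  simp only [h, sum_add_distrib, ← outSum_apply,
    sum_filter_fst_of_mem_alternatingFun (outSum_mem_alternatingFun hf)]
  ring

theorem mem_map_outSum_eigenspace_neg_one_iff {g : V → ℂ} (hg : g ∈ G.alternatingFun) :
    g ∈ (eigenspace (edgeLaplacian G) (-1)).map G.outSum ↔
      (fun v => g v * (2 - G.degree v)) ∈ LinearMap.range G.incidence.mulVecLin := by
  constructor
  · rintro ⟨f, hf, rfl⟩
    exact ⟨f, incidence_mulVec_of_mem_eigenspace hf⟩
  · rintro ⟨f', hf'⟩
    set f : DirEdge G → ℂ := fun e => (f' e + f' e.rev - g e.1.2) / 2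
    have hout : G.outSum f = g := by
      funext v
      have hv := congrFun hf' v
      rw [mulVecLin_apply, incidence_mulVec, Pi.add_apply, Function.comp_def] at hv
      rw [outSum_apply, ← sum_div, sum_sub_distrib, sum_add_distrib,
        sum_filter_fst_of_mem_alternatingFun hg, ← outSum_apply, ← outSum_apply]
      linear_combination hv / 2
    refine ⟨f, mem_eigenspace_neg_one_iff.mpr fun e => ?_, hout⟩
    rw [hout]
    simp only [f, rev_rev, rev_snd]
    linear_combination -(hg _ _ e.2) / 2

theorem two_mul_finrank_eigenspace_neg_one :
    2 * finrank ℂ (eigenspace (edgeLaplacian G) (-1)) + 2 * Fintype.card V =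
      Fintype.card (DirEdge G) + 2 * finrank ℂ G.alternatingFun +
        2 * finrank ℂ ((eigenspace (edgeLaplacian G) (-1)).map G.outSum) := by
  have hE := G.outSum.finrank_map_add_finrank_inf_ker (eigenspace (edgeLaplacian G) (-1))
  have hS := G.outSum.finrank_map_add_finrank_inf_ker (invariantFun ℂ rev)
  have hN := rank_incidence_add_finrank_alternatingFun (G := G)
  have hdim := two_mul_finrank_invariantFun (K := ℂ) rev_involutive (rev_ne_self (G := G))
  rw [eigenspace_neg_one_inf_ker_outSum] at hE
  rw [← range_incidence] at hS
  rw [Matrix.rank] at hN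
  omega

theorem sign_dotProduct_incidence_mulVec (C : G.Coloring (Fin 2)) (f : DirEdge G → ℂ) :
    C.sign ⬝ᵥ (G.incidence *ᵥ f) = 0 := by
  have h : (G.incidence)ᵀ *ᵥ C.sign = 0 :=
    (ker_incidence_transpose (G := G)).ge C.sign_mem_alternatingFun
  rw [dotProduct_mulVec, ← mulVec_transpose, h, zero_dotProduct]

theorem sign_dotProduct_sign_mul (C : G.Coloring (Fin 2)) :
    C.sign ⬝ᵥ (fun v => C.sign v * (2 - G.degree v)) =
      2 * Fintype.card V - Fintype.card (DirEdge G) := by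
  simp only [dotProduct, ← mul_assoc, C.sign_mul_self, one_mul, sum_sub_distrib,
    card_dirEdge_eq_sum_degree]
  simp [mul_comm]

theorem range_incidence_eq_ker_sign (hconn : G.Connected) (C : G.Coloring (Fin 2)) :
    LinearMap.range G.incidence.mulVecLin = LinearMap.ker (dotProductEquiv ℂ V C.sign) := by
  refine Submodule.eq_of_le_of_finrank_eq ?_ ?_
  · rintro _ ⟨f, rfl⟩
    simp [sign_dotProduct_incidence_mulVec]
  · have hN := rank_incidence_add_finrank_alternatingFun (G := G)
    have hsign : dotProductEquiv ℂ V C.sign ≠ 0 := by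
      obtain ⟨u⟩ := hconn.nonempty
      refine (LinearEquiv.map_ne_zero_iff _).mpr fun h => ?_
      simpa [h] using C.sign_mul_self u
    have hker := Module.Dual.finrank_ker_add_one_of_ne_zero hsign
    rw [finrank_alternatingFun_eq_one hconn C, Matrix.rank] at hN
    rw [finrank_fintype_fun_eq_card] at hker
    omega

theorem map_outSum_eigenspace_neg_one_le :
    (eigenspace (edgeLaplacian G) (-1)).map G.outSum ≤ G.alternatingFun :=
  Submodule.map_le_iff_le_comap.mpr fun _ hf => outSum_mem_alternatingFun hf

theorem finrank_map_outSum_eigenspace_neg_one (hconn : G.Connected) (C : G.Coloring (Fin 2)) :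
    finrank ℂ ((eigenspace (edgeLaplacian G) (-1)).map G.outSum) =
      if Fintype.card (DirEdge G) = 2 * Fintype.card V then 1 else 0 := by
  have hle := map_outSum_eigenspace_neg_one_le (G := G)
  split_ifs with hcard
  · have hsign : C.sign ∈ (eigenspace (edgeLaplacian G) (-1)).map G.outSum := by
      rw [mem_map_outSum_eigenspace_neg_one_iff C.sign_mem_alternatingFun,
        range_incidence_eq_ker_sign hconn C, LinearMap.mem_ker, dotProductEquiv_apply_apply,
        sign_dotProduct_sign_mul, hcard]
      push_cast
      ring
    rw [le_antisymm hle (by rwa [alternatingFun_eq_span_sign hconn C,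
      Submodule.span_singleton_le_iff_mem]), finrank_alternatingFun_eq_one hconn C]
  · refine Submodule.finrank_eq_zero.mpr ((Submodule.eq_bot_iff _).mpr fun g hg => ?_)
    obtain ⟨f, hf⟩ := (mem_map_outSum_eigenspace_neg_one_iff (hle hg)).mp hg
    obtain ⟨t, rfl⟩ :=
      Submodule.mem_span_singleton.mp (alternatingFun_eq_span_sign hconn C ▸ hle hg)
    have hscale : (fun v => (t • C.sign) v * (2 - (G.degree v : ℂ))) =
        t • fun v => C.sign v * (2 - G.degree v) := by
      funext v
      simp [mul_assoc]
    have h := congrArg (C.sign ⬝ᵥ ·) (hf.trans hscale)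
    simp only [mulVecLin_apply, sign_dotProduct_incidence_mulVec, dotProduct_smul,
      sign_dotProduct_sign_mul, smul_eq_mul] at h
    rw [eq_comm, mul_eq_zero, sub_eq_zero] at h
    rcases h with rfl | h
    · exact zero_smul _ _
    · exact absurd (by exact_mod_cast h.symm) hcard

end

end SimpleGraph

theorem dim_edge_laplacian_eigenspace_neg_one_general
    {V : Type*} [Fintype V] [DecidableEq V]
    (G : SimpleGraph V) [DecidableRel G.Adj]
    (hconn : G.Connected)
    (c : ℕ) (hc : 2 * c + 2 * Fintype.card V = Fintype.card (DirEdge G) + 2) :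
    ((c ≠ 1 ∨ ¬ G.Colorable 2) →
      (G.Colorable 2 →
        Module.finrank ℂ ↥(Module.End.eigenspace (edgeLaplacian G) (-1 : ℂ)) = c) ∧
      (¬ G.Colorable 2 →
        Module.finrank ℂ ↥(Module.End.eigenspace (edgeLaplacian G) (-1 : ℂ)) = c - 1)) ∧
    ((c = 1 ∧ G.Colorable 2) →
      Module.finrank ℂ ↥(Module.End.eigenspace (edgeLaplacian G) (-1 : ℂ)) = 2) := by
  have hdim := SimpleGraph.two_mul_finrank_eigenspace_neg_one (G := G)
  by_cases hbip : G.Colorable 2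
  · obtain ⟨C⟩ := hbip
    rw [SimpleGraph.finrank_alternatingFun_eq_one hconn C,
      SimpleGraph.finrank_map_outSum_eigenspace_neg_one hconn C] at hdim
    split_ifs at hdim with hcard
    · exact ⟨fun h => absurd ⟨C⟩ (h.resolve_left (by omega)), fun _ => by omega⟩
    · exact ⟨fun _ => ⟨fun _ => by omega, fun h => absurd ⟨C⟩ h⟩, fun h => absurd h.1 (by omega)⟩
  · have hmap := Submodule.finrank_mono (SimpleGraph.map_outSum_eigenspace_neg_one_le (G := G))
    rw [SimpleGraph.alternatingFun_eq_bot hconn hbip, finrank_bot] at hdim hmap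
    exact ⟨fun _ => ⟨fun h => absurd h hbip, fun _ => by omega⟩, fun h => absurd h.2 hbip⟩

/-- **Eigenvalue `−1` of the edge Laplacian.**  Let `𝔊` be a finite connected
(symmetric, loopless) graph without dead ends, with cyclomatic number `c` (so
`2c + 2|V| = #(directed edges) + 2`); bipartiteness is `2`-colorability.
If `c ≠ 1` or `𝔊` is not bipartite, then `dim{Δ_𝔈 = −1}` equals `c` if `𝔊` is
bipartite and `c − 1` if `𝔊` is not bipartite.  If `c = 1` and `𝔊` is bipartite, then
`dim{Δ_𝔈 = −1} = 2`. -/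
theorem dim_edge_laplacian_eigenspace_neg_one
    {V : Type*} [Fintype V] [DecidableEq V]
    (G : SimpleGraph V) [DecidableRel G.Adj]
    (hconn : G.Connected)
    (hdeg : ∀ x : V, 1 < G.degree x)
    (c : ℕ) (hc : 2 * c + 2 * Fintype.card V = Fintype.card (DirEdge G) + 2) :
    ((c ≠ 1 ∨ ¬ G.Colorable 2) →
      (G.Colorable 2 →
        Module.finrank ℂ ↥(Module.End.eigenspace (edgeLaplacian G) (-1 : ℂ)) = c) ∧
      (¬ G.Colorable 2 →
        Module.finrank ℂ ↥(Module.End.eigenspace (edgeLaplacian G) (-1 : ℂ)) = c - 1)) ∧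
    ((c = 1 ∧ G.Colorable 2) →
      Module.finrank ℂ ↥(Module.End.eigenspace (edgeLaplacian G) (-1 : ℂ)) = 2) :=
  dim_edge_laplacian_eigenspace_neg_one_general G hconn c hc
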